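/- arXiv:2109.12677 — 9 statements merged into one kernel-verified Lean document; each statement's English description precedes it below -/
import Mathlib

section
/- If Φ: X → 2^Y is a compact-valued mapping that is both lower and upper semi-continuous, Ω is a discrete family of open subsets of Y, then the family {Φ⁻¹(O) : O ∈ Ω} is a locally finite family of open subsets of X. -/
/-- If `Φ : X → 2^Y` is a compact-valued mapping that is both lower and upper
semi-continuous, and `Ω` is a discrete family of open subsets of `Y`, then the
family `{Φ⁻¹(O) : O ∈ Ω}` is a locally finite family of open subsets of `X`. -/
theorem preimage_discrete_locallyFinite {X Y : Type*}
    [TopologicalSpace X] [TopologicalSpace Y]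
    (Φ : X → Set Y) (hcomp : ∀ x, IsCompact (Φ x)) (hne : ∀ x, (Φ x).Nonempty)
    (hlsc : ∀ U : Set Y, IsOpen U → IsOpen {x | (Φ x ∩ U).Nonempty})
    (husc : ∀ F : Set Y, IsClosed F → IsClosed {x | (Φ x ∩ F).Nonempty})
    (Ω : Set (Set Y)) (hΩopen : ∀ O ∈ Ω, IsOpen O)
    (hΩdisc : ∀ y : Y, ∃ V ∈ nhds y, {O | O ∈ Ω ∧ (O ∩ V).Nonempty}.Subsingleton) :
    (∀ O : Ω, IsOpen {x | (Φ x ∩ (O : Set Y)).Nonempty}) ∧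
      LocallyFinite (fun O : Ω => {x | (Φ x ∩ (O : Set Y)).Nonempty}) := by
  refine ⟨fun O => hlsc O (hΩopen O O.2), ?_⟩
  intro x
  choose V hVmem hVsub using hΩdisc
  have hU : ∀ y ∈ Φ x, interior (V y) ∈ nhds y :=
    fun y _ => interior_mem_nhds.2 (hVmem y)
  obtain ⟨t, -, ht⟩ := (hcomp x).elim_nhds_subcover _ hU
  set W : Set Y := ⋃ y ∈ t, interior (V y) with hW
  have hWopen : IsOpen W := isOpen_biUnion fun _ _ => isOpen_interior
  set N : Set X := {x' | (Φ x' ∩ Wᶜ).Nonempty}ᶜ with hN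
  refine ⟨N, ?_, ?_⟩
  · refine (husc Wᶜ hWopen.isClosed_compl).isOpen_compl.mem_nhds ?_
    simp only [hN, Set.mem_compl_iff, Set.mem_setOf_eq, Set.inter_compl_nonempty_iff,
      not_not]
    exact ht
  · have hsub : {O : Ω | ({x' | (Φ x' ∩ (O : Set Y)).Nonempty} ∩ N).Nonempty} ⊆
        ⋃ y ∈ t, {O : Ω | (O : Set Y) ∈ Ω ∧ ((O : Set Y) ∩ V y).Nonempty} := by
      rintro O ⟨x', hx'O, hx'N⟩
      have hΦsub : Φ x' ⊆ W := by
        by_contra h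
        exact hx'N (Set.inter_compl_nonempty_iff.2 h)
      obtain ⟨z, hzΦ, hzO⟩ := hx'O
      have : z ∈ W := hΦsub hzΦ
      simp only [hW, Set.mem_iUnion, exists_prop] at this
      obtain ⟨y, hyt, hzy⟩ := this
      exact Set.mem_biUnion hyt ⟨O.2, z, hzO, interior_subset hzy⟩
    refine Set.Finite.subset (Set.Finite.biUnion t.finite_toSet fun y _ => ?_) hsub
    refine Set.Subsingleton.finite fun O₁ h₁ O₂ h₂ => Subtype.ext ?_
    exact hVsub y h₁ h₂
end

section
/- A normal topological space X is countably paracompact if and only if for every upper semicontinuous ξ: X → ℝ and lower semicontinuous η: X → ℝ with ξ(x) < η(x) for all x, there exists a continuous f: X → ℝ with ξ(x) < f(x) < η(x) for all x (Dowker's insertion theorem). -/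
open Set Function

/-- From the insertion property, every countable open cover admits a monotone open
"shrinking" whose closures are inside the partial unions of the cover. -/
lemma dowker_shrink {X : Type*} [TopologicalSpace X]
    (hins : ∀ ξ η : X → ℝ, (∀ r : ℝ, IsOpen {x | ξ x < r}) → (∀ r : ℝ, IsOpen {x | r < η x}) →
      (∀ x, ξ x < η x) →
      ∃ f : X → ℝ, Continuous f ∧ ∀ x, ξ x < f x ∧ f x < η x)
    (u : ℕ → Set X) (ho : ∀ n, IsOpen (u n)) (hU : (⋃ n, u n) = Set.univ) :
    ∃ W : ℕ → Set X, (∀ n, IsOpen (W n)) ∧ Monotone W ∧ (⋃ n, W n) = Set.univ ∧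
      ∀ n, closure (W n) ⊆ ⋃ k ≤ n, u k := by
  classical
  set U' : ℕ → Set X := fun n => ⋃ k ≤ n, u k with hU'def
  have hex : ∀ x, ∃ n, x ∈ U' n := by
    intro x
    have : x ∈ ⋃ n, u n := hU ▸ mem_univ x
    rcases mem_iUnion.1 this with ⟨n, hn⟩
    exact ⟨n, mem_iUnion₂.2 ⟨n, le_rfl, hn⟩⟩
  have hU'o : ∀ n, IsOpen (U' n) := fun n => isOpen_biUnion fun k _ => ho k
  set m : X → ℕ := fun x => Nat.find (hex x) with hm
  set η : X → ℝ := fun x => (2⁻¹ : ℝ) ^ (m x) with hη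
  have h2 : (0:ℝ) < 2⁻¹ := by norm_num
  have h2' : (2⁻¹:ℝ) < 1 := by norm_num
  have hηpos : ∀ x, 0 < η x := fun x => pow_pos h2 _
  have hlsc : ∀ r : ℝ, IsOpen {x | r < η x} := by
    intro r
    have hset : {x | r < η x} = ⋃ (n : ℕ) (_ : r < (2⁻¹:ℝ)^n), U' n := by
      ext x
      simp only [mem_setOf_eq, mem_iUnion]
      constructor
      · intro h; exact ⟨m x, h, Nat.find_spec (hex x)⟩
      · rintro ⟨n, hr, hx⟩
        have hmn : m x ≤ n := Nat.find_min' (hex x) hx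
        calc r < (2⁻¹:ℝ)^n := hr
          _ ≤ (2⁻¹:ℝ)^(m x) := pow_le_pow_of_le_one (le_of_lt h2) (le_of_lt h2') hmn
    rw [hset]; exact isOpen_iUnion fun n => isOpen_iUnion fun _ => hU'o n
  have husc : ∀ r : ℝ, IsOpen {x : X | (fun _ : X => (0:ℝ)) x < r} := by
    intro r
    by_cases h : (0:ℝ) < r
    · simpa [h] using (isOpen_univ : IsOpen (univ : Set X))
    · simpa [h] using (isOpen_empty : IsOpen (∅ : Set X))
  obtain ⟨f, hf, hfb⟩ := hins (fun _ => 0) η husc hlsc (fun x => hηpos x)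
  refine ⟨fun n => {x | (2⁻¹:ℝ)^(n+1) < f x}, fun n => isOpen_lt continuous_const hf,
    ?_, ?_, ?_⟩
  · intro a b hab x hx
    have : (2⁻¹:ℝ)^(b+1) ≤ (2⁻¹:ℝ)^(a+1) :=
      pow_le_pow_of_le_one (le_of_lt h2) (le_of_lt h2') (by omega)
    exact lt_of_le_of_lt this hx
  · apply eq_univ_of_forall
    intro x
    have hfx : 0 < f x := (hfb x).1
    obtain ⟨n, hn⟩ := exists_pow_lt_of_lt_one hfx h2'
    refine mem_iUnion.2 ⟨n, ?_⟩
    have : (2⁻¹:ℝ)^(n+1) ≤ (2⁻¹:ℝ)^n :=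
      pow_le_pow_of_le_one (le_of_lt h2) (le_of_lt h2') (by omega)
    exact lt_of_le_of_lt this hn
  · intro n
    have hsub : closure {x | (2⁻¹:ℝ)^(n+1) < f x} ⊆ {x | (2⁻¹:ℝ)^(n+1) ≤ f x} := by
      apply closure_minimal _ (isClosed_le continuous_const hf)
      intro x hx
      simp only [mem_setOf_eq] at hx ⊢
      exact le_of_lt hx
    intro x hx
    have hx' : (2⁻¹:ℝ)^(n+1) ≤ f x := hsub hx
    have hxη : (2⁻¹:ℝ)^(n+1) < η x := lt_of_le_of_lt hx' (hfb x).2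
    have hmx : m x < n + 1 := by
      by_contra h
      push_neg at h
      have : η x ≤ (2⁻¹:ℝ)^(n+1) :=
        pow_le_pow_of_le_one (le_of_lt h2) (le_of_lt h2') h
      exact absurd hxη (not_lt.2 this)
    have : x ∈ U' (m x) := Nat.find_spec (hex x)
    rcases mem_iUnion₂.1 this with ⟨k, hk, hxk⟩
    exact mem_iUnion₂.2 ⟨k, le_trans hk (by omega), hxk⟩

/-- Dowker's insertion theorem: a T1 normal space `X` is countably paracompact
if and only if for every upper semicontinuous `ξ : X → ℝ` and lower
semicontinuous `η : X → ℝ` with `ξ < η` pointwise there is a continuous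
`f : X → ℝ` with `ξ < f < η` pointwise. -/
theorem dowker_insertion {X : Type*} [TopologicalSpace X] [T1Space X] [NormalSpace X] :
    (∀ u : ℕ → Set X, (∀ n, IsOpen (u n)) → (⋃ n, u n) = Set.univ →
      ∃ (ι : Type) (v : ι → Set X), (∀ i, IsOpen (v i)) ∧ (⋃ i, v i) = Set.univ ∧
        (∀ i, ∃ n, v i ⊆ u n) ∧ LocallyFinite v) ↔
    (∀ ξ η : X → ℝ, (∀ r : ℝ, IsOpen {x | ξ x < r}) → (∀ r : ℝ, IsOpen {x | r < η x}) →
      (∀ x, ξ x < η x) →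
      ∃ f : X → ℝ, Continuous f ∧ ∀ x, ξ x < f x ∧ f x < η x) := by
  constructor
  · -- countably paracompact → insertion
    intro hcp ξ η hξ hη hlt
    obtain ⟨q, hq⟩ := exists_surjective_nat ℚ
    set u : ℕ → Set X := fun n => {x | ξ x < (q n : ℝ)} ∩ {x | (q n : ℝ) < η x} with hu
    have huo : ∀ n, IsOpen (u n) := fun n => (hξ _).inter (hη _)
    have huU : (⋃ n, u n) = Set.univ := by
      apply eq_univ_of_forall
      intro x
      obtain ⟨r, hr1, hr2⟩ := exists_rat_btwn (hlt x)
      obtain ⟨n, rfl⟩ := hq r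
      exact mem_iUnion.2 ⟨n, hr1, hr2⟩
    obtain ⟨ι, v, hvo, hvU, hvsub, hvlf⟩ := hcp u huo huU
    choose nn hnn using hvsub
    have hpf : ∀ x, {i | x ∈ v i}.Finite := hvlf.point_finite
    obtain ⟨w, hwU, hwo, hwcl⟩ := exists_iUnion_eq_closure_subset hvo hpf hvU
    have hwpf : ∀ x, {i | x ∈ w i}.Finite := fun x =>
      (hpf x).subset fun i hi => subset_closure.trans (hwcl i) hi
    obtain ⟨w', hw'U, _hw'o, hw'cl⟩ := exists_iUnion_eq_closure_subset hwo hwpf hwU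
    -- Urysohn functions
    have hgex : ∀ i, ∃ g : C(X, ℝ), EqOn g 0 (w i)ᶜ ∧ EqOn g 1 (closure (w' i)) ∧
        ∀ x, g x ∈ Icc (0:ℝ) 1 :=
      fun i => exists_continuous_zero_one_of_isClosed (hwo i).isClosed_compl isClosed_closure
        (by
          rw [disjoint_compl_left_iff_subset]
          exact hw'cl i)
    choose g hg0 hg1 hg01 using hgex
    have hgnn : ∀ i x, 0 ≤ g i x := fun i x => (hg01 i x).1
    have hsupp : ∀ i, support (fun x => g i x) ⊆ w i := by
      intro i x hx
      by_contra h
      exact hx (hg0 i h)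
    have hsuppv : ∀ i, support (fun x => g i x) ⊆ v i := fun i =>
      (hsupp i).trans (subset_closure.trans (hwcl i))
    have hslf : LocallyFinite fun i => support (fun x => g i x) := hvlf.subset hsuppv
    -- pointwise finite support
    have hptfin : ∀ x, (support fun i => g i x).Finite := by
      intro x
      apply (hpf x).subset
      intro i hi
      exact hsuppv i hi
    -- denominator
    set S : X → ℝ := fun x => ∑ᶠ i, g i x with hS
    have hScont : Continuous S := continuous_finsum (fun i => (g i).continuous) hslf
    have hSpos : ∀ x, 0 < S x := by
      intro x
      have : x ∈ ⋃ i, w' i := hw'U ▸ mem_univ x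
      rcases mem_iUnion.1 this with ⟨j, hj⟩
      have h1 : g j x = 1 := hg1 j (subset_closure hj)
      have : (1:ℝ) ≤ S x := by
        rw [← h1]
        exact single_le_finsum j (hptfin x) (fun i => hgnn i x)
      linarith
    set N : X → ℝ := fun x => ∑ᶠ i, (q (nn i) : ℝ) * g i x with hN
    have hNcont : Continuous N := by
      apply continuous_finsum (fun i => continuous_const.mul (g i).continuous)
      apply hslf.subset
      intro i
      exact fun x hx => by
        simp only [mem_support] at hx ⊢
        intro h; exact hx (by simp [h])
    refine ⟨fun x => N x / S x, hNcont.div hScont (fun x => ne_of_gt (hSpos x)), ?_⟩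
    intro x
    -- finite set of relevant indices
    set s : Finset ι := (hptfin x).toFinset with hs
    have hSsum : S x = ∑ i ∈ s, g i x := by
      apply finsum_eq_sum_of_support_subset
      intro i hi; simpa [hs] using hi
    have hNsum : N x = ∑ i ∈ s, (q (nn i) : ℝ) * g i x := by
      apply finsum_eq_sum_of_support_subset
      intro i hi
      simp only [mem_support] at hi
      have : g i x ≠ 0 := by intro h; exact hi (by simp [h])
      simpa [hs] using this
    have hmem : ∀ i ∈ s, g i x ≠ 0 := by
      intro i hi
      simpa [hs] using hi
    have hbound : ∀ i ∈ s, ξ x < (q (nn i) : ℝ) ∧ (q (nn i) : ℝ) < η x := by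
      intro i hi
      have hxv : x ∈ v i := hsuppv i (by simpa [mem_support] using hmem i hi)
      have := hnn i hxv
      exact ⟨this.1, this.2⟩
    have hne : s.Nonempty := by
      have : x ∈ ⋃ i, w' i := hw'U ▸ mem_univ x
      rcases mem_iUnion.1 this with ⟨j, hj⟩
      have h1 : g j x = 1 := hg1 j (subset_closure hj)
      exact ⟨j, by simp [hs, mem_support, h1]⟩
    constructor
    · rw [lt_div_iff₀ (hSpos x), hNsum, hSsum, Finset.mul_sum]
      apply Finset.sum_lt_sum
      · intro i hi
        have := (hbound i hi).1
        exact mul_le_mul_of_nonneg_right (le_of_lt this) (hgnn i x)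
      · obtain ⟨j, hj⟩ := hne
        refine ⟨j, hj, ?_⟩
        have hgj : 0 < g j x := lt_of_le_of_ne (hgnn j x) (Ne.symm (hmem j hj))
        exact mul_lt_mul_of_pos_right (hbound j hj).1 hgj
    · rw [div_lt_iff₀ (hSpos x), hNsum, hSsum, Finset.mul_sum]
      apply Finset.sum_lt_sum
      · intro i hi
        exact mul_le_mul_of_nonneg_right (le_of_lt (hbound i hi).2) (hgnn i x)
      · obtain ⟨j, hj⟩ := hne
        refine ⟨j, hj, ?_⟩
        have hgj : 0 < g j x := lt_of_le_of_ne (hgnn j x) (Ne.symm (hmem j hj))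
        exact mul_lt_mul_of_pos_right (hbound j hj).2 hgj
  · -- insertion → countably paracompact
    intro hins u ho hU
    classical
    obtain ⟨W, hWo, hWmono, hWU, hWcl⟩ := dowker_shrink hins u ho hU
    obtain ⟨W', hW'o, _hW'mono, hW'U, hW'cl⟩ := dowker_shrink hins W hWo hWU
    have hW'clW : ∀ n, closure (W' n) ⊆ W n := by
      intro n
      refine (hW'cl n).trans ?_
      intro x hx
      rcases mem_iUnion₂.1 hx with ⟨k, hk, hxk⟩
      exact hWmono hk hxk
    -- T n = W n minus closures of earlier W'
    set T : ℕ → Set X := fun n => W n \ ⋃ (k) (_ : k < n), closure (W' k) with hT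
    have hclosedb : ∀ n, IsClosed (⋃ (k) (_ : k < n), closure (W' k)) := by
      intro n
      apply Set.Finite.isClosed_biUnion (finite_lt_nat n)
      intro k _; exact isClosed_closure
    have hTo : ∀ n, IsOpen (T n) := fun n => (hWo n).sdiff (hclosedb n)
    have hexW : ∀ x, ∃ n, x ∈ W n := by
      intro x
      have : x ∈ ⋃ n, W n := hWU ▸ mem_univ x
      exact mem_iUnion.1 this
    have hTcov : ∀ x, ∃ n, x ∈ T n := by
      intro x
      refine ⟨Nat.find (hexW x), Nat.find_spec (hexW x), ?_⟩
      intro hx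
      rcases mem_iUnion₂.1 hx with ⟨k, hk, hxk⟩
      exact Nat.find_min (hexW x) hk (hW'clW k hxk)
    have hTsub : ∀ n, T n ⊆ ⋃ k ≤ n, u k := by
      intro n
      exact (diff_subset.trans subset_closure).trans (hWcl n)
    refine ⟨ℕ × ℕ, fun p => if p.2 ≤ p.1 then T p.1 ∩ u p.2 else ∅, ?_, ?_, ?_, ?_⟩
    · intro p
      by_cases h : p.2 ≤ p.1
      · simp only [h, if_true]
        exact (hTo p.1).inter (ho p.2)
      · simp only [h, if_false]
        exact isOpen_empty
    · apply eq_univ_of_forall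
      intro x
      obtain ⟨n, hn⟩ := hTcov x
      have hxW : x ∈ ⋃ k ≤ n, u k := hTsub n hn
      rcases mem_iUnion₂.1 hxW with ⟨k, hk, hxk⟩
      refine mem_iUnion.2 ⟨(n, k), ?_⟩
      simp only [hk, if_true]
      exact ⟨hn, hxk⟩
    · intro p
      by_cases h : p.2 ≤ p.1
      · exact ⟨p.2, by simp only [h, if_true]; exact inter_subset_right⟩
      · exact ⟨0, by simp only [h, if_false]; exact empty_subset _⟩
    · intro x
      have : x ∈ ⋃ n, W' n := hW'U ▸ mem_univ x
      rcases mem_iUnion.1 this with ⟨N, hN⟩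
      refine ⟨W' N, (hW'o N).mem_nhds hN, ?_⟩
      apply Set.Finite.subset ((finite_Iic N).prod (finite_Iic N))
      rintro ⟨n, k⟩ ⟨y, hy1, hy2⟩
      by_cases h : k ≤ n
      · simp only [h, if_true] at hy1
        have hnN : n ≤ N := by
          by_contra hcon
          push_neg at hcon
          have : y ∈ closure (W' N) := subset_closure hy2
          exact hy1.1.2 (mem_iUnion₂.2 ⟨N, hcon, this⟩)
        exact ⟨mem_Iic.2 hnN, mem_Iic.2 (le_trans h hnN)⟩
      · simp only [h, if_false] at hy1
        exact absurd hy1 (notMem_empty y)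
end

section
/- A topological space X is normal if and only if for every upper semicontinuous ξ: X → ℝ and lower semicontinuous η: X → ℝ with ξ ≤ η, there exists a continuous f: X → ℝ with ξ ≤ f ≤ η (Katětov–Tong insertion theorem). -/
/-!
Let `g ≤ h` take values in `[a, b]`, with `g` upper and `h` lower semicontinuous. The sets
`{h ≤ a + kε}` and `{a + (k + 1)ε ≤ g}` are closed and disjoint, so Urysohn functions `φₖ`
separating them give a continuous `a + ε ∑ₖ φₖ` between `g - ε` and `h + ε`. Applied to
`max g (f - δ) ≤ min h (f + δ)`, this turns a `δ`-approximation `f` into an `ε`-approximation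
within `δ + ε` of `f`; with `δ = 2⁻ⁿ` and `ε = 2⁻ⁿ⁻¹` the approximations converge uniformly to a
continuous function between `g` and `h`. An order isomorphism `ℝ ≃o (-1, 1)` removes the bounds.
Conversely, a continuous function inserted between the indicators of disjoint closed sets `s` and
`tᶜ` separates them by its level sets at `1/2`.
-/

open Set Filter Topology Finset

theorem natCast_le_sum_range_of_eq_one {u : ℕ → ℝ} {j N : ℕ} (hu : ∀ k, 0 ≤ u k)
    (hu1 : ∀ k < j, u k = 1) (hjN : j ≤ N) : (j : ℝ) ≤ ∑ k ∈ range N, u k :=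
  calc (j : ℝ) = ∑ k ∈ range j, u k := by
        rw [Finset.sum_congr rfl fun k hk => hu1 k (mem_range.1 hk)]; simp
    _ ≤ ∑ k ∈ range N, u k :=
        sum_le_sum_of_subset_of_nonneg (range_subset_range.2 hjN) fun k _ _ => hu k

theorem sum_range_le_natCast_of_eq_zero {u : ℕ → ℝ} {J N : ℕ} (hu : ∀ k, u k ≤ 1)
    (hu0 : ∀ k, J ≤ k → u k = 0) : ∑ k ∈ range N, u k ≤ J :=
  calc ∑ k ∈ range N, u k = ∑ k ∈ (range N).filter (· < J), u k :=
        (sum_filter_of_ne fun k _ hk => not_le.1 fun hJk => hk (hu0 k hJk)).symm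
    _ ≤ #((range N).filter (· < J)) • (1 : ℝ) := sum_le_card_nsmul _ _ _ fun k _ => hu k
    _ ≤ J := by
        have : (range N).filter (· < J) ⊆ range J := fun k hk => mem_range.2 (mem_filter.1 hk).2
        simpa using Finset.card_le_card this

section

variable {X : Type*} [TopologicalSpace X]

theorem exists_continuous_between_sub_add [NormalSpace X] {g h : X → ℝ} {a b ε : ℝ}
    (hg : UpperSemicontinuous g) (hh : LowerSemicontinuous h) (hgh : g ≤ h)
    (ha : ∀ x, a ≤ g x) (hb : ∀ x, h x ≤ b) (hε : 0 < ε) :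
    ∃ f : X → ℝ, Continuous f ∧ ∀ x, g x - ε ≤ f x ∧ f x ≤ h x + ε := by
  have hdisj (k : ℕ) : Disjoint (h ⁻¹' Iic (a + k * ε)) (g ⁻¹' Ici (a + (k + 1) * ε)) :=
    Set.disjoint_left.2 fun x (hxh : h x ≤ _) (hxg : _ ≤ g x) => by linarith [hgh x]
  choose φ hφ0 hφ1 hφI using fun k : ℕ => exists_continuous_zero_one_of_isClosed
    (hh.isClosed_preimage (a + k * ε)) (hg.isClosed_preimage (a + (k + 1) * ε)) (hdisj k)
  set N := ⌈(b - a) / ε⌉₊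
  refine ⟨fun x => a + ε * ∑ k ∈ range N, φ k x, by fun_prop, fun x => ⟨?_, ?_⟩⟩
  · set s := (g x - a) / ε
    have hs : 0 ≤ s := div_nonneg (sub_nonneg.2 (ha x)) hε.le
    have hsum : (⌊s⌋₊ : ℝ) ≤ ∑ k ∈ range N, φ k x := by
      refine natCast_le_sum_range_of_eq_one (fun k => (hφI k x).1) (fun k hk => hφ1 k ?_) ?_
      · have : (k + 1 : ℝ) ≤ s :=
          le_trans (by exact_mod_cast Nat.succ_le_of_lt hk) (Nat.floor_le hs)
        show a + (k + 1) * ε ≤ g x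
        rw [le_div_iff₀ hε] at this
        linarith
      · exact (Nat.floor_mono (div_le_div_of_nonneg_right (by linarith [hgh x, hb x]) hε.le)).trans
          (Nat.floor_le_ceil _)
    have hfloor : g x - a < ε * (⌊s⌋₊ + 1) :=
      calc g x - a = ε * s := (mul_div_cancel₀ _ hε.ne').symm
        _ < ε * (⌊s⌋₊ + 1) := mul_lt_mul_of_pos_left (Nat.lt_floor_add_one s) hε
    linarith [mul_le_mul_of_nonneg_left hsum hε.le]
  · set s := (h x - a) / ε
    have hs : 0 ≤ s := div_nonneg (sub_nonneg.2 ((ha x).trans (hgh x))) hε.le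
    have hsum : ∑ k ∈ range N, φ k x ≤ ⌈s⌉₊ := by
      refine sum_range_le_natCast_of_eq_zero (fun k => (hφI k x).2) (fun k hk => hφ0 k ?_)
      have : s ≤ k := Nat.ceil_le.1 hk
      show h x ≤ a + k * ε
      rw [div_le_iff₀ hε] at this
      linarith
    have hceil : ε * ⌈s⌉₊ < h x - a + ε :=
      calc ε * ⌈s⌉₊ < ε * (s + 1) := mul_lt_mul_of_pos_left (Nat.ceil_lt_add_one hs) hε
        _ = h x - a + ε := by rw [mul_add, mul_div_cancel₀ _ hε.ne', mul_one]
    linarith [mul_le_mul_of_nonneg_left hsum hε.le]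

theorem exists_continuous_between_sub_add_dist_le [NormalSpace X] {g h f : X → ℝ} {a b δ ε : ℝ}
    (hg : UpperSemicontinuous g) (hh : LowerSemicontinuous h) (hgh : g ≤ h)
    (ha : ∀ x, a ≤ g x) (hb : ∀ x, h x ≤ b) (hf : Continuous f)
    (hgf : ∀ x, g x - δ ≤ f x) (hfh : ∀ x, f x ≤ h x + δ) (hδ : 0 ≤ δ) (hε : 0 < ε) :
    ∃ f' : X → ℝ, Continuous f' ∧ (∀ x, g x - ε ≤ f' x ∧ f' x ≤ h x + ε) ∧
      ∀ x, dist (f' x) (f x) ≤ δ + ε := by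
  have hlo : UpperSemicontinuous fun x => max (g x) (f x - δ) :=
    hg.sup (by fun_prop : Continuous fun x => f x - δ).upperSemicontinuous
  have hhi : LowerSemicontinuous fun x => min (h x) (f x + δ) :=
    hh.inf (by fun_prop : Continuous fun x => f x + δ).lowerSemicontinuous
  have hlohi (x : X) : max (g x) (f x - δ) ≤ min (h x) (f x + δ) :=
    max_le (le_min (hgh x) (by linarith [hgf x])) (le_min (by linarith [hfh x]) (by linarith))
  obtain ⟨f', hf', hf'b⟩ := exists_continuous_between_sub_add hlo hhi hlohi
    (fun x => (ha x).trans (le_max_left _ _)) (fun x => (min_le_left _ _).trans (hb x)) hε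
  refine ⟨f', hf', fun x => ?_, fun x => ?_⟩
  · have := hf'b x
    constructor <;> linarith [le_max_left (g x) (f x - δ), min_le_left (h x) (f x + δ)]
  · have := hf'b x
    rw [Real.dist_eq, abs_le]
    constructor <;> linarith [le_max_right (g x) (f x - δ), min_le_right (h x) (f x + δ)]

theorem exists_seq_continuous_between_sub_add_pow [NormalSpace X] {g h : X → ℝ} {a b : ℝ}
    (hg : UpperSemicontinuous g) (hh : LowerSemicontinuous h) (hgh : g ≤ h)
    (ha : ∀ x, a ≤ g x) (hb : ∀ x, h x ≤ b) :
    ∃ F : ℕ → X → ℝ, (∀ n, Continuous (F n)) ∧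
      (∀ n x, g x - 2⁻¹ ^ n ≤ F n x ∧ F n x ≤ h x + 2⁻¹ ^ n) ∧
      ∀ n x, dist (F n x) (F (n + 1) x) ≤ 3 / 2 * 2⁻¹ ^ n := by
  let P (n : ℕ) (f : X → ℝ) : Prop :=
    Continuous f ∧ ∀ x, g x - 2⁻¹ ^ n ≤ f x ∧ f x ≤ h x + 2⁻¹ ^ n
  have start : ∃ f, P 0 f := exists_continuous_between_sub_add hg hh hgh ha hb (by positivity)
  have step (n : ℕ) (f : X → ℝ) (hf : P n f) :
      ∃ f', P (n + 1) f' ∧ ∀ x, dist (f' x) (f x) ≤ 2⁻¹ ^ n + 2⁻¹ ^ (n + 1) := by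
    obtain ⟨f', hf', hf'b, hdist⟩ := exists_continuous_between_sub_add_dist_le hg hh hgh ha hb hf.1
      (fun x => (hf.2 x).1) (fun x => (hf.2 x).2) (by positivity)
      (by positivity : (0 : ℝ) < 2⁻¹ ^ (n + 1))
    exact ⟨f', ⟨hf', hf'b⟩, hdist⟩
  choose next hnext using step
  let F (n : ℕ) : {f // P n f} :=
    Nat.rec ⟨start.choose, start.choose_spec⟩ (fun n f => ⟨next n f f.2, (hnext n f f.2).1⟩) n
  refine ⟨fun n => (F n).val, fun n => (F n).2.1, fun n => (F n).2.2, fun n x => ?_⟩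
  calc dist ((F n).1 x) ((F (n + 1)).1 x) ≤ 2⁻¹ ^ n + 2⁻¹ ^ (n + 1) :=
        dist_comm ((F n).1 x) _ ▸ (hnext n _ (F n).2).2 x
    _ = 3 / 2 * 2⁻¹ ^ n := by ring

theorem exists_continuous_tendsto_of_dist_le_geometric {α : Type*} [PseudoMetricSpace α]
    [CompleteSpace α] {F : ℕ → X → α} {C r : ℝ} (hr₀ : 0 ≤ r) (hr₁ : r < 1)
    (hF : ∀ n, Continuous (F n)) (hdist : ∀ n x, dist (F n x) (F (n + 1) x) ≤ C * r ^ n) :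
    ∃ L : X → α, Continuous L ∧ ∀ x, Tendsto (F · x) atTop (𝓝 (L x)) := by
  choose L hL using fun x =>
    cauchySeq_tendsto_of_complete (cauchySeq_of_le_geometric r C hr₁ fun n => hdist n x)
  have hbound : Tendsto (fun n => C * r ^ n / (1 - r)) atTop (𝓝 0) := by
    simpa using ((tendsto_pow_atTop_nhds_zero_of_lt_one hr₀ hr₁).const_mul C).div_const (1 - r)
  have hunif : TendstoUniformly F L atTop := by
    refine Metric.tendstoUniformly_iff.2 fun ε hε => ?_
    filter_upwards [hbound.eventually (gt_mem_nhds hε)] with n hn x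
    rw [dist_comm]
    exact (dist_le_of_le_geometric_of_tendsto r C hr₁ (fun n => hdist n x) (hL x) n).trans_lt hn
  exact ⟨L, hunif.continuous (.of_forall hF), hL⟩

theorem exists_continuous_between_of_bounded [NormalSpace X] {g h : X → ℝ} {a b : ℝ}
    (hg : UpperSemicontinuous g) (hh : LowerSemicontinuous h) (hgh : g ≤ h)
    (ha : ∀ x, a ≤ g x) (hb : ∀ x, h x ≤ b) :
    ∃ f : X → ℝ, Continuous f ∧ g ≤ f ∧ f ≤ h := by
  obtain ⟨F, hF, hFgh, hFdist⟩ := exists_seq_continuous_between_sub_add_pow hg hh hgh ha hb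
  obtain ⟨L, hL, hFL⟩ :=
    exists_continuous_tendsto_of_dist_le_geometric (by norm_num) (by norm_num) hF hFdist
  have hε : Tendsto (fun n : ℕ => (2⁻¹ : ℝ) ^ n) atTop (𝓝 0) :=
    tendsto_pow_atTop_nhds_zero_of_lt_one (by norm_num) (by norm_num)
  refine ⟨L, hL, fun x => ?_, fun x => ?_⟩
  · simpa using ge_of_tendsto' ((hFL x).add hε) fun n => by linarith [hFgh n x]
  · simpa using le_of_tendsto' ((hFL x).sub hε) fun n => by linarith [hFgh n x]

theorem exists_continuous_between [NormalSpace X] {g h : X → ℝ}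
    (hg : UpperSemicontinuous g) (hh : LowerSemicontinuous h) (hgh : g ≤ h) :
    ∃ f : X → ℝ, Continuous f ∧ g ≤ f ∧ f ≤ h := by
  let e := orderIsoIooNegOneOne ℝ
  have he : Continuous fun y => (e y : ℝ) := continuous_subtype_val.comp e.continuous
  have he' : Monotone fun y => (e y : ℝ) := fun y z hyz => e.monotone hyz
  obtain ⟨F, hF, hgF, hFh⟩ := exists_continuous_between_of_bounded
    (he.comp_upperSemicontinuous hg he') (he.comp_lowerSemicontinuous hh he')
    (fun x => he' (hgh x)) (fun x => (e (g x)).2.1.le) (fun x => (e (h x)).2.2.le)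
  have hFmem (x : X) : F x ∈ Ioo (-1 : ℝ) 1 :=
    ⟨(e (g x)).2.1.trans_le (hgF x), (hFh x).trans_lt (e (h x)).2.2⟩
  exact ⟨fun x => e.symm ⟨F x, hFmem x⟩, e.symm.continuous.comp (hF.subtype_mk hFmem),
    fun x => e.le_symm_apply.2 (hgF x), fun x => e.symm_apply_le.2 (hFh x)⟩

theorem NormalSpace.of_exists_continuous_between
    (H : ∀ g h : X → ℝ, UpperSemicontinuous g → LowerSemicontinuous h → g ≤ h →
      ∃ f : X → ℝ, Continuous f ∧ g ≤ f ∧ f ≤ h) :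
    NormalSpace X := by
  refine ⟨fun s t hs ht hst => ?_⟩
  obtain ⟨f, hf, hsf, hft⟩ := H (s.indicator fun _ => 1) (tᶜ.indicator fun _ => 1)
    (hs.upperSemicontinuous_indicator zero_le_one)
    (ht.isOpen_compl.lowerSemicontinuous_indicator zero_le_one)
    (indicator_le_indicator_of_subset hst.subset_compl_right fun _ => zero_le_one)
  refine ⟨f ⁻¹' Ioi 2⁻¹, f ⁻¹' Iio 2⁻¹, isOpen_Ioi.preimage hf, isOpen_Iio.preimage hf,
    fun x hx => ?_, fun x hx => ?_, Ioi_disjoint_Iio_same.preimage f⟩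
  · have : 1 ≤ f x := by simpa [hx] using hsf x
    exact (by norm_num : (2⁻¹ : ℝ) < 1).trans_le this
  · have : f x ≤ 0 := by simpa [hx] using hft x
    exact this.trans_lt (by norm_num : (0 : ℝ) < 2⁻¹)

end

theorem katetov_tong_insertion_general {X : Type*} [TopologicalSpace X] :
    NormalSpace X ↔
    (∀ ξ η : X → ℝ, (∀ r : ℝ, IsOpen {x | ξ x < r}) → (∀ r : ℝ, IsOpen {x | r < η x}) →
      (∀ x, ξ x ≤ η x) →
      ∃ f : X → ℝ, Continuous f ∧ ∀ x, ξ x ≤ f x ∧ f x ≤ η x) := by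
  constructor
  · intro _ ξ η hξ hη hξη
    obtain ⟨f, hf, hξf, hfη⟩ := exists_continuous_between
      (upperSemicontinuous_iff_isOpen_preimage.2 hξ)
      (lowerSemicontinuous_iff_isOpen_preimage.2 hη) hξη
    exact ⟨f, hf, fun x => ⟨hξf x, hfη x⟩⟩
  · refine fun H => NormalSpace.of_exists_continuous_between fun ξ η hξ hη hξη => ?_
    obtain ⟨f, hf, hfb⟩ := H ξ η hξ.isOpen_preimage hη.isOpen_preimage hξη
    exact ⟨f, hf, fun x => (hfb x).1, fun x => (hfb x).2⟩

/-- The Katětov–Tong insertion theorem: a T1 space `X` is normal if and only if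
for every upper semicontinuous `ξ : X → ℝ` and lower semicontinuous `η : X → ℝ`
with `ξ ≤ η` there exists a continuous `f : X → ℝ` with `ξ ≤ f ≤ η`. -/
theorem katetov_tong_insertion {X : Type*} [TopologicalSpace X] [T1Space X] :
    NormalSpace X ↔
    (∀ ξ η : X → ℝ, (∀ r : ℝ, IsOpen {x | ξ x < r}) → (∀ r : ℝ, IsOpen {x | r < η x}) →
      (∀ x, ξ x ≤ η x) →
      ∃ f : X → ℝ, Continuous f ∧ ∀ x, ξ x ≤ f x ∧ f x ≤ η x) :=
  katetov_tong_insertion_general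
end

section
/- If a space X satisfies the set-valued insertion property for pairs of semicontinuous [−1,1]-interval-valued mappings — namely, whenever Φ(x)=[−1,η(x)] is l.s.c. and θ(x)=[−1,ξ(x)] is u.s.c. with θ(x) ⊆ Φ(x) and Φ(x)∖θ(x) ≠ ∅ for all x, there exists a continuous compact-connected-valued φ with θ(x) ⊆ φ(x) ⊆ Φ(x) and φ(x)∖θ(x) ≠ ∅ — then for every u.s.c. ξ: X → ℝ and l.s.c. η: X → ℝ with ξ < η pointwise there is a continuous f: X → ℝ with ξ < f < η. -/
/-!
Taking suprema turns a continuous map into `NonemptyCompacts ℝ` into a continuous real function,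
since `sSup` is `1`-Lipschitz for the Hausdorff metric. Applied to an inserted `φ` with
`[-1, ξ] ⊆ φ ⊆ [-1, η]` and `φ ⊄ [-1, ξ]`, it gives a continuous `g` with `ξ < g ≤ η`; applied to
the reflected pair `(-η, -ξ)`, it gives a continuous `g'` with `ξ ≤ g' < η`, and their average
lies strictly between `ξ` and `η`. The order isomorphism `ℝ ≃o (-1, 1)` removes the bounds.
-/

open Set TopologicalSpace Metric

lemma TopologicalSpace.NonemptyCompacts.sSup_le_sSup_add_dist (A B : NonemptyCompacts ℝ) :
    sSup (A : Set ℝ) ≤ sSup (B : Set ℝ) + dist A B := by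
  refine le_of_forall_pos_le_add fun ε hε => ?_
  have hfin : hausdorffEDist (A : Set ℝ) (B : Set ℝ) ≠ ⊤ :=
    hausdorffEDist_ne_top_of_nonempty_of_bounded A.nonempty B.nonempty
      A.isCompact.isBounded B.isCompact.isBounded
  have hlt : hausdorffDist (A : Set ℝ) (B : Set ℝ) < dist A B + ε := by
    rw [NonemptyCompacts.dist_eq]; linarith
  obtain ⟨y, hyB, hy⟩ :=
    exists_dist_lt_of_hausdorffDist_lt (A.isCompact.sSup_mem A.nonempty) hlt hfin
  have hy_le : y ≤ sSup (B : Set ℝ) := le_csSup B.isCompact.bddAbove hyB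
  linarith [(abs_lt.1 (Real.dist_eq _ _ ▸ hy)).2]

lemma TopologicalSpace.NonemptyCompacts.lipschitzWith_one_sSup :
    LipschitzWith 1 fun A : NonemptyCompacts ℝ => sSup (A : Set ℝ) := by
  refine LipschitzWith.of_dist_le_mul fun A B => ?_
  rw [NNReal.coe_one, one_mul, Real.dist_eq, abs_sub_le_iff]
  exact ⟨by linarith [A.sSup_le_sSup_add_dist B],
    by linarith [B.sSup_le_sSup_add_dist A, dist_comm A B]⟩

lemma lt_csSup_of_diff_Icc_nonempty {α : Type*} [ConditionallyCompleteLinearOrder α] {A : Set α}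
    {a c : α} (hA : BddAbove A) (ha : A ⊆ Ici a) (h : (A \ Icc a c).Nonempty) : c < sSup A := by
  obtain ⟨y, hyA, hy⟩ := h
  have hcy : c < y := lt_of_not_ge fun hyc => hy ⟨ha hyA, hyc⟩
  exact hcy.trans_le (le_csSup hA hyA)

/-- The insertion property for `Φ x = [-1, η x]` and `θ x = [-1, ξ x]`, encoded by their right
endpoints. -/
def IntervalInsertionProperty (X : Type*) [TopologicalSpace X] : Prop :=
  ∀ ξ η : X → ℝ,
    (∀ x, ξ x ∈ Set.Ioo (-1:ℝ) 1) → (∀ x, η x ∈ Set.Ioo (-1:ℝ) 1) →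
    (∀ r : ℝ, IsOpen {x | ξ x < r}) → (∀ r : ℝ, IsOpen {x | r < η x}) →
    (∀ x, ξ x < η x) →
    ∃ φ : X → NonemptyCompacts ℝ, Continuous φ ∧ ∀ x,
      IsConnected (φ x : Set ℝ) ∧
      Set.Icc (-1:ℝ) (ξ x) ⊆ (φ x : Set ℝ) ∧
      (φ x : Set ℝ) ⊆ Set.Icc (-1:ℝ) (η x) ∧
      ((φ x : Set ℝ) \ Set.Icc (-1:ℝ) (ξ x)).Nonempty

namespace IntervalInsertionProperty

variable {X : Type*} [TopologicalSpace X] {ξ η : X → ℝ}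

lemma exists_continuous_gt_le (hP : IntervalInsertionProperty X)
    (hξ : UpperSemicontinuous ξ) (hη : LowerSemicontinuous η)
    (hξ₁ : ∀ x, ξ x ∈ Ioo (-1 : ℝ) 1) (hη₁ : ∀ x, η x ∈ Ioo (-1 : ℝ) 1) (hξη : ∀ x, ξ x < η x) :
    ∃ g : X → ℝ, Continuous g ∧ ∀ x, ξ x < g x ∧ g x ≤ η x := by
  obtain ⟨φ, hφ, hφx⟩ := hP ξ η hξ₁ hη₁ (upperSemicontinuous_iff_isOpen_preimage.1 hξ)
    (lowerSemicontinuous_iff_isOpen_preimage.1 hη) hξη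
  refine ⟨fun x => sSup (φ x : Set ℝ), NonemptyCompacts.lipschitzWith_one_sSup.continuous.comp hφ,
    fun x => ?_⟩
  obtain ⟨-, -, hφΦ, hφθ⟩ := hφx x
  exact ⟨lt_csSup_of_diff_Icc_nonempty (φ x).isCompact.bddAbove
      (hφΦ.trans Icc_subset_Ici_self) hφθ,
    csSup_le (φ x).nonempty fun y hy => (hφΦ hy).2⟩

lemma exists_continuous_ge_lt (hP : IntervalInsertionProperty X)
    (hξ : UpperSemicontinuous ξ) (hη : LowerSemicontinuous η)
    (hξ₁ : ∀ x, ξ x ∈ Ioo (-1 : ℝ) 1) (hη₁ : ∀ x, η x ∈ Ioo (-1 : ℝ) 1) (hξη : ∀ x, ξ x < η x) :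
    ∃ g : X → ℝ, Continuous g ∧ ∀ x, ξ x ≤ g x ∧ g x < η x := by
  have hneg₁ {t : ℝ} (ht : t ∈ Ioo (-1 : ℝ) 1) : -t ∈ Ioo (-1 : ℝ) 1 :=
    ⟨neg_lt_neg ht.2, by linarith [ht.1]⟩
  obtain ⟨g, hg, hgx⟩ := hP.exists_continuous_gt_le (ξ := fun x => -η x) (η := fun x => -ξ x)
    (continuous_neg.comp_lowerSemicontinuous_antitone hη fun _ _ => neg_le_neg)
    (continuous_neg.comp_upperSemicontinuous_antitone hξ fun _ _ => neg_le_neg)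
    (fun x => hneg₁ (hη₁ x)) (fun x => hneg₁ (hξ₁ x)) (fun x => neg_lt_neg (hξη x))
  exact ⟨fun x => -g x, hg.neg, fun x => ⟨le_neg.1 (hgx x).2, neg_lt.1 (hgx x).1⟩⟩

lemma exists_continuous_between_of_mem_Ioo (hP : IntervalInsertionProperty X)
    (hξ : UpperSemicontinuous ξ) (hη : LowerSemicontinuous η)
    (hξ₁ : ∀ x, ξ x ∈ Ioo (-1 : ℝ) 1) (hη₁ : ∀ x, η x ∈ Ioo (-1 : ℝ) 1) (hξη : ∀ x, ξ x < η x) :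
    ∃ f : X → ℝ, Continuous f ∧ ∀ x, ξ x < f x ∧ f x < η x := by
  obtain ⟨g₁, hg₁, hg₁x⟩ := hP.exists_continuous_gt_le hξ hη hξ₁ hη₁ hξη
  obtain ⟨g₂, hg₂, hg₂x⟩ := hP.exists_continuous_ge_lt hξ hη hξ₁ hη₁ hξη
  refine ⟨fun x => (g₁ x + g₂ x) / 2, by fun_prop, fun x => ?_⟩
  obtain ⟨h₁, h₁'⟩ := hg₁x x
  obtain ⟨h₂, h₂'⟩ := hg₂x x
  constructor <;> linarith

lemma exists_continuous_between (hP : IntervalInsertionProperty X)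
    (hξ : UpperSemicontinuous ξ) (hη : LowerSemicontinuous η) (hξη : ∀ x, ξ x < η x) :
    ∃ f : X → ℝ, Continuous f ∧ ∀ x, ξ x < f x ∧ f x < η x := by
  let e : ℝ ≃o Ioo (-1 : ℝ) 1 := orderIsoIooNegOneOne ℝ
  have he : Continuous fun t => (e t : ℝ) := continuous_subtype_val.comp e.continuous
  have he_mono : Monotone fun t => (e t : ℝ) := fun _ _ h => e.monotone h
  obtain ⟨f, hf, hfx⟩ := hP.exists_continuous_between_of_mem_Ioo
    (he.comp_upperSemicontinuous hξ he_mono) (he.comp_lowerSemicontinuous hη he_mono)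
    (fun x => (e (ξ x)).2) (fun x => (e (η x)).2) (fun x => e.strictMono (hξη x))
  have hf₁ (x : X) : f x ∈ Ioo (-1 : ℝ) 1 :=
    ⟨(e (ξ x)).2.1.trans (hfx x).1, (hfx x).2.trans (e (η x)).2.2⟩
  refine ⟨fun x => e.symm ⟨f x, hf₁ x⟩, e.symm.continuous.comp (hf.subtype_mk hf₁), fun x => ?_⟩
  exact ⟨e.lt_symm_apply.2 (hfx x).1, e.symm_apply_lt.2 (hfx x).2⟩

end IntervalInsertionProperty

/-- If a space `X` satisfies the set-valued insertion property for pairs of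
semicontinuous `[-1,1]`-interval-valued mappings — whenever `Φ(x) = [-1,η(x)]`
is l.s.c. and `θ(x) = [-1,ξ(x)]` is u.s.c. with `θ ⊆ Φ` and `Φ(x) ∖ θ(x) ≠ ∅`,
there is a continuous compact-connected-valued `φ` with
`θ(x) ⊆ φ(x) ⊆ Φ(x)` and `φ(x) ∖ θ(x) ≠ ∅` — then for every u.s.c. `ξ : X → ℝ`
and l.s.c. `η : X → ℝ` with `ξ < η` pointwise there is a continuous `f : X → ℝ`
with `ξ < f < η` pointwise. -/
theorem insertion_property_implies_dowker_conclusion {X : Type*} [TopologicalSpace X]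
    (H : ∀ ξ η : X → ℝ,
      (∀ x, ξ x ∈ Set.Ioo (-1:ℝ) 1) → (∀ x, η x ∈ Set.Ioo (-1:ℝ) 1) →
      (∀ r : ℝ, IsOpen {x | ξ x < r}) → (∀ r : ℝ, IsOpen {x | r < η x}) →
      (∀ x, ξ x < η x) →
      ∃ φ : X → NonemptyCompacts ℝ, Continuous φ ∧ ∀ x,
        IsConnected (φ x : Set ℝ) ∧
        Set.Icc (-1:ℝ) (ξ x) ⊆ (φ x : Set ℝ) ∧
        (φ x : Set ℝ) ⊆ Set.Icc (-1:ℝ) (η x) ∧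
        ((φ x : Set ℝ) \ Set.Icc (-1:ℝ) (ξ x)).Nonempty) :
    ∀ ξ η : X → ℝ, (∀ r : ℝ, IsOpen {x | ξ x < r}) → (∀ r : ℝ, IsOpen {x | r < η x}) →
      (∀ x, ξ x < η x) →
      ∃ f : X → ℝ, Continuous f ∧ ∀ x, ξ x < f x ∧ f x < η x := fun _ _ hξ hη hξη =>
  IntervalInsertionProperty.exists_continuous_between H
    (upperSemicontinuous_iff_isOpen_preimage.2 hξ) (lowerSemicontinuous_iff_isOpen_preimage.2 hη)
    hξη
end

section
/- If K is a nonempty compact subset of a metric space Y and Ψ: X → 2^Y is lower semi-continuous with K ⊆ O_ε(Ψ(x₀)) for some x₀ ∈ X and ε > 0, then there exists an open neighborhood W of x₀ such that K ⊆ O_ε(Ψ(x)) for all x ∈ W. -/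
/-- If `K` is a nonempty compact subset of a metric space `Y` and `Ψ : X → 2^Y`
is lower semi-continuous with `K ⊆ O_ε(Ψ(x₀))` for some `x₀ ∈ X` and `ε > 0`,
then there exists an open neighbourhood `W` of `x₀` with `K ⊆ O_ε(Ψ(x))` for
all `x ∈ W`. -/
theorem lsc_neighbourhood_of_compact_in_thickening {X Y : Type*}
    [TopologicalSpace X] [MetricSpace Y]
    (Ψ : X → Set Y) (hlsc : ∀ U : Set Y, IsOpen U → IsOpen {x | (Ψ x ∩ U).Nonempty})
    (K : Set Y) (hK : IsCompact K) (hKne : K.Nonempty)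
    (x₀ : X) (ε : ℝ) (hε : 0 < ε)
    (h : K ⊆ ⋃ p ∈ Ψ x₀, Metric.ball p ε) :
    ∃ W : Set X, IsOpen W ∧ x₀ ∈ W ∧ ∀ x ∈ W, K ⊆ ⋃ p ∈ Ψ x, Metric.ball p ε := by
  have hex : ∀ k ∈ K, ∃ q, q ∈ Ψ x₀ ∧ dist k q < ε := by
    intro k hk
    obtain ⟨q, hq, hd⟩ := Set.mem_iUnion₂.1 (h hk)
    exact ⟨q, hq, Metric.mem_ball.1 hd⟩
  choose! p hp hd using hex
  set r : Y → ℝ := fun k => (ε - dist k (p k)) / 2 with hr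
  have hrpos : ∀ k ∈ K, 0 < r k := fun k hk => by
    have := hd k hk; simp only [hr]; linarith
  obtain ⟨t, htK, hcov⟩ := hK.elim_nhds_subcover (fun k => Metric.ball k (r k))
    (fun k hk => Metric.ball_mem_nhds k (hrpos k hk))
  refine ⟨⋂ k ∈ t, {x | (Ψ x ∩ Metric.ball (p k) (r k)).Nonempty}, ?_, ?_, ?_⟩
  · exact isOpen_biInter_finset (fun k _ => hlsc _ Metric.isOpen_ball)
  · exact Set.mem_iInter₂.2 fun k hk =>
      ⟨p k, hp k (htK k hk), Metric.mem_ball_self (hrpos k (htK k hk))⟩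
  · intro x hx y hy
    obtain ⟨k, hkt, hyk⟩ := Set.mem_iUnion₂.1 (hcov hy)
    obtain ⟨q, hq, hq'⟩ := Set.mem_iInter₂.1 hx k hkt
    refine Set.mem_iUnion₂.2 ⟨q, hq, Metric.mem_ball.2 ?_⟩
    have hd' := hd k (htK k hkt)
    rw [Metric.mem_ball] at hyk hq'
    have h4 : dist y q ≤ dist y k + dist k (p k) + dist (p k) q := dist_triangle4 y k (p k) q
    rw [dist_comm (p k) q] at h4
    simp only [hr] at hyk hq'
    linarith
end

section
/- Suppose X is a T1 space such that, whenever F_1, F_2 are disjoint closed subsets of X and the mappings Φ: X → 2^{{0,1,2}} and θ: X → 2^{{0,1,2}} are defined by Φ(x) = {0,i} for x ∈ F_i (i = 1,2), Φ(x) = {0,1,2} otherwise, and θ(x) = {0}, there always exists a continuous φ: X → 2^{{0,1,2}} with θ(x) ⊊ φ(x) ⊆ Φ(x) for all x. Then any two disjoint closed subsets of X are contained in disjoint clopen subsets. -/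
/-- Suppose that for all disjoint closed sets `F₁, F₂ ⊆ X`, for the specific
mappings `Φ(x) = {0,i}` for `x ∈ Fᵢ` and `Φ(x) = {0,1,2}` otherwise, and
`θ(x) = {0}`, there always exists a continuous (locally constant) set-valued
`φ : X → 2^{0,1,2}` with `θ(x) ⊊ φ(x) ⊆ Φ(x)` for all `x`. Then any two
disjoint closed subsets of `X` are contained in disjoint clopen subsets. -/
theorem insertion_implies_dim_zero {X : Type*} [TopologicalSpace X] [T1Space X]
    (H : ∀ F₁ F₂ : Set X, IsClosed F₁ → IsClosed F₂ → Disjoint F₁ F₂ →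
      ∃ φ : X → Set (Fin 3), IsLocallyConstant φ ∧ ∀ x,
        ({0} : Set (Fin 3)) ⊆ φ x ∧ φ x ≠ ({0} : Set (Fin 3)) ∧
        φ x ⊆ {y : Fin 3 | y = 0 ∨ (y = 1 ∧ x ∉ F₂) ∨ (y = 2 ∧ x ∉ F₁)}) :
    ∀ F₁ F₂ : Set X, IsClosed F₁ → IsClosed F₂ → Disjoint F₁ F₂ →
      ∃ U₁ U₂ : Set X, IsClopen U₁ ∧ IsClopen U₂ ∧ Disjoint U₁ U₂ ∧
        F₁ ⊆ U₁ ∧ F₂ ⊆ U₂ := by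
  intro F₁ F₂ h₁ h₂ hd
  obtain ⟨φ, hlc, hφ⟩ := H F₁ F₂ h₁ h₂ hd
  set U₁ : Set X := φ ⁻¹' {S | (1 : Fin 3) ∈ S} with hU₁
  have hco : IsOpen U₁ᶜ := by
    have : U₁ᶜ = φ ⁻¹' {S | (1 : Fin 3) ∈ S}ᶜ := rfl
    rw [this]; exact hlc _
  refine ⟨U₁, U₁ᶜ, ⟨compl_compl U₁ ▸ hco.isClosed_compl, hlc _⟩, ⟨(hlc _).isClosed_compl, hco⟩,
    disjoint_compl_right, ?_, ?_⟩
  · intro x hx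
    obtain ⟨h0, hne, hsub⟩ := hφ x
    -- φ x ≠ {0}, so there is y ∈ φ x with y ≠ 0
    have : ∃ y ∈ φ x, y ≠ 0 := by
      by_contra h
      push_neg at h
      exact hne (Set.Subset.antisymm (fun y hy => h y hy) h0)
    obtain ⟨y, hy, hy0⟩ := this
    have := hsub hy
    have hxF₂ : x ∉ F₂ := Set.disjoint_left.mp hd hx
    rcases this with h | ⟨h, _⟩ | ⟨h, h'⟩
    · exact absurd h hy0
    · simpa [hU₁, ← h] using hy
    · exact absurd hx h'
  · intro x hx
    obtain ⟨h0, hne, hsub⟩ := hφ x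
    simp only [Set.mem_compl_iff, hU₁, Set.mem_preimage, Set.mem_setOf_eq]
    intro h1
    rcases hsub h1 with h | ⟨_, h⟩ | ⟨h, _⟩
    · exact absurd h (by decide)
    · exact h hx
    · exact absurd h (by decide)
end

section
/- Let ℱ be a locally finite closed cover of a space X and suppose there exists a continuous mapping φ: X → C(J(ℱ)) (compact-valued, continuous for the Hausdorff metric) such that ⟨1,F⟩ ∈ φ(x) whenever x ∈ F ∈ ℱ. Then the sets U_F = {x ∈ X : φ(x) ∩ O_{1/2}(⟨1,F⟩) ≠ ∅}, F ∈ ℱ, form a locally finite family of open subsets of X with F ⊆ U_F for every F ∈ ℱ; in particular X is ℱ-expandable for the family ℱ. -/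
open Classical

/-- The point set of the metrizable hedgehog `J A`: the centre `none = 0`
together with the spines `(0,1] × A`. -/
abbrev Hedgehog (A : Type*) := Option (Set.Ioc (0:ℝ) 1 × A)

/-- The hedgehog distance. -/
noncomputable def hd {A : Type*} : Hedgehog A → Hedgehog A → ℝ
  | none, none => 0
  | none, some p => p.1
  | some p, none => p.1
  | some p, some q => if p.2 = q.2 then |(p.1:ℝ) - q.1| else (p.1:ℝ) + q.1

theorem hd_comm {A : Type*} (p q : Hedgehog A) : hd p q = hd q p := by
  rcases p with _ | ⟨s, a⟩ <;> rcases q with _ | ⟨t, b⟩ <;> simp [hd]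
  rcases eq_or_ne a b with h | h
  · simp [h, abs_sub_comm]
  · simp [h, h.symm, add_comm]

theorem hd_self {A : Type*} (p : Hedgehog A) : hd p p = 0 := by
  rcases p with _ | ⟨s, a⟩ <;> simp [hd]

theorem hd_eq_zero {A : Type*} (p q : Hedgehog A) : hd p q = 0 ↔ p = q := by
  rcases p with _ | ⟨s, a⟩ <;> rcases q with _ | ⟨t, b⟩ <;> simp [hd]
  · exact fun h => absurd h (ne_of_gt t.2.1)
  · exact fun h => absurd h (ne_of_gt s.2.1)
  · rcases eq_or_ne a b with h | h
    · simp [h, sub_eq_zero, Subtype.ext_iff]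
    · simp [h]
      intro he; nlinarith [s.2.1, t.2.1]

theorem hd_triangle {A : Type*} (p q r : Hedgehog A) : hd p r ≤ hd p q + hd q r := by
  have habs : ∀ x y : ℝ, 0 < x → 0 < y → |x - y| ≤ x + y := by
    intro x y hx hy; rw [abs_le]; constructor <;> linarith
  rcases p with _ | ⟨s, a⟩ <;> rcases q with _ | ⟨t, b⟩ <;> rcases r with _ | ⟨u, c⟩ <;>
      simp only [hd]
  · linarith
  · linarith
  · linarith [t.2.1]
  · split_ifs with h
    · have h1 : (u:ℝ) - t ≤ |(t:ℝ) - u| := by rw [abs_sub_comm]; exact le_abs_self _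
      linarith
    · linarith [t.2.1]
  · linarith
  · split_ifs with h
    · exact habs _ _ s.2.1 u.2.1
    · linarith
  · split_ifs with h
    · have h1 : (s:ℝ) - t ≤ |(s:ℝ) - t| := le_abs_self _
      linarith
    · linarith [t.2.1]
  · rcases eq_or_ne a b with hab | hab <;> rcases eq_or_ne b c with hbc | hbc
    · have hac : a = c := hab.trans hbc
      simp only [if_pos hac, if_pos hab, if_pos hbc]
      exact abs_sub_le _ _ _
    · have hac : a ≠ c := hab ▸ hbc
      simp only [if_neg hac, if_pos hab, if_neg hbc]
      have h1 : (s:ℝ) - t ≤ |(s:ℝ) - t| := le_abs_self _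
      linarith
    · have hac : a ≠ c := fun h => hab (h.trans hbc.symm)
      simp only [if_neg hac, if_neg hab, if_pos hbc]
      have h1 : (u:ℝ) - t ≤ |(t:ℝ) - u| := by rw [abs_sub_comm]; exact le_abs_self _
      linarith
    · simp only [if_neg hab, if_neg hbc]
      split_ifs with hac
      · have := habs (s:ℝ) u s.2.1 u.2.1
        linarith [t.2.1]
      · linarith [t.2.1]

/-- The hedgehog `J A` as a metric space (hence topological space). -/
noncomputable instance hedgehogMetric {A : Type*} : MetricSpace (Hedgehog A) where
  dist := hd
  dist_self := hd_self
  dist_comm := hd_comm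
  dist_triangle := hd_triangle
  eq_of_dist_eq_zero := fun h => (hd_eq_zero _ _).1 h

open TopologicalSpace

/-- The tip `⟨1,F⟩` of the spine of `J A` indexed by `a`. -/
def tip {A : Type*} (a : A) : Hedgehog A := some (⟨1, by norm_num⟩, a)

lemma hedgehog_dist_def {A : Type*} (p q : Hedgehog A) : dist p q = hd p q := rfl

lemma mem_ball_tip_aux {A : Type*} {p : Hedgehog A} {a : A} {r : ℝ} (hr : r ≤ 1)
    (h : dist p (tip a) < r) :
    ∃ s : Set.Ioc (0:ℝ) 1, p = some (s, a) ∧ 1 - r < (s:ℝ) := by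
  rcases p with _ | ⟨s, b⟩
  · exfalso
    simp only [hedgehog_dist_def, hd, tip] at h
    linarith
  · rcases eq_or_ne b a with hba | hba
    · refine ⟨s, by rw [hba], ?_⟩
      simp only [hedgehog_dist_def, hd, tip, if_pos hba] at h
      have := (abs_lt.1 h).1
      linarith
    · exfalso
      simp only [hedgehog_dist_def, hd, tip, if_neg hba] at h
      have := s.2.1
      linarith

lemma tip_sep {A : Type*} {p q : Hedgehog A} {a b : A} (hab : a ≠ b)
    (hp : dist p (tip a) < 3/4) (hq : dist q (tip b) < 3/4) : 1/2 < dist p q := by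
  obtain ⟨s, rfl, hs⟩ := mem_ball_tip_aux (by norm_num) hp
  obtain ⟨t, rfl, ht⟩ := mem_ball_tip_aux (by norm_num) hq
  simp only [hedgehog_dist_def, hd, if_neg hab]
  linarith

lemma finite_meets {A : Type*} {K : Set (Hedgehog A)} (hK : IsCompact K) :
    {a : A | (K ∩ Metric.ball (tip a) (3/4)).Nonempty}.Finite := by
  set S := {a : A | (K ∩ Metric.ball (tip a) (3/4)).Nonempty} with hS
  obtain ⟨t, htf, htc⟩ := (Metric.totallyBounded_iff.1 hK.totallyBounded) (1/4) (by norm_num)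
  have hp : ∀ a ∈ S, ∃ p, p ∈ K ∧ dist p (tip a) < 3/4 := by
    rintro a ⟨p, hpK, hpb⟩
    exact ⟨p, hpK, by simpa [Metric.mem_ball] using hpb⟩
  choose! p hpK hpd using hp
  have hy : ∀ a ∈ S, ∃ y ∈ t, dist (p a) y < 1/4 := by
    intro a ha
    have := htc (hpK a ha)
    simpa [Metric.mem_ball] using this
  choose! y hyt hyb using hy
  have hinj : Set.InjOn y S := by
    intro a ha b hb hyab
    by_contra hab
    have h1 := hyb a ha
    have h2 := hyb b hb
    rw [hyab] at h1
    have hlt : dist (p a) (p b) < 1/2 := by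
      calc dist (p a) (p b) ≤ dist (p a) (y b) + dist (y b) (p b) := dist_triangle _ _ _
        _ < 1/4 + 1/4 := by rw [dist_comm (y b) (p b)]; exact add_lt_add h1 h2
        _ = 1/2 := by norm_num
    exact absurd hlt (not_lt.2 (le_of_lt (tip_sep hab (hpd a ha) (hpd b hb))))
  exact Set.Finite.of_finite_image
    (htf.subset (by rintro _ ⟨a, ha, rfl⟩; exact hyt a ha)) hinj

/-- Let `ℱ` be a locally finite closed cover of `X` and `φ : X → C(J(ℱ))` a
continuous compact-valued mapping (continuous for the Hausdorff metric) with
`⟨1,F⟩ ∈ φ(x)` whenever `x ∈ F ∈ ℱ`. Then the sets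
`U_F = {x : φ(x) ∩ O_{1/2}(⟨1,F⟩) ≠ ∅}` form a locally finite family of open
subsets of `X` with `F ⊆ U_F` for every `F ∈ ℱ`. -/
theorem expandable_from_continuous_selection {X : Type*} [TopologicalSpace X]
    (ℱ : Set (Set X)) (hclosed : ∀ F ∈ ℱ, IsClosed F)
    (hlf : LocallyFinite (fun F : ↥ℱ => (F : Set X)))
    (hcov : ⋃₀ ℱ = Set.univ)
    (φ : X → NonemptyCompacts (Hedgehog ↥ℱ)) (hφ : Continuous φ)
    (htip : ∀ (F : ↥ℱ), ∀ x ∈ (F : Set X), tip F ∈ (φ x : Set (Hedgehog ↥ℱ))) :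
    (∀ F : ↥ℱ, IsOpen
      {x | ((φ x : Set (Hedgehog ↥ℱ)) ∩ Metric.ball (tip F) (1/2)).Nonempty}) ∧
    LocallyFinite (fun F : ↥ℱ =>
      {x | ((φ x : Set (Hedgehog ↥ℱ)) ∩ Metric.ball (tip F) (1/2)).Nonempty}) ∧
    (∀ F : ↥ℱ, (F : Set X) ⊆
      {x | ((φ x : Set (Hedgehog ↥ℱ)) ∩ Metric.ball (tip F) (1/2)).Nonempty}) := by
  have hfin : ∀ x y : X, EMetric.hausdorffEdist
      ((φ y : Set (Hedgehog ↥ℱ))) ((φ x : Set (Hedgehog ↥ℱ))) ≠ ⊤ := fun x y =>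
    Metric.hausdorffEdist_ne_top_of_nonempty_of_bounded (φ y).nonempty (φ x).nonempty
      (φ y).isCompact.isBounded (φ x).isCompact.isBounded
  refine ⟨?_, ?_, ?_⟩
  · intro F
    rw [isOpen_iff_mem_nhds]
    rintro x ⟨p, hpφ, hpb⟩
    rw [Metric.mem_ball] at hpb
    set ε := 1/2 - dist p (tip F) with hε
    have hε0 : 0 < ε := by simp [hε]; linarith
    have hW : φ ⁻¹' (Metric.ball (φ x) ε) ∈ nhds x :=
      (Metric.isOpen_ball.preimage hφ).mem_nhds (by simp [Metric.mem_ball, hε0])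
    refine Filter.mem_of_superset hW ?_
    intro y hy
    rw [Set.mem_preimage, Metric.mem_ball, Metric.NonemptyCompacts.dist_eq] at hy
    obtain ⟨q, hqφ, hq⟩ := Metric.exists_dist_lt_of_hausdorffDist_lt' hpφ hy (hfin x y)
    refine ⟨q, hqφ, ?_⟩
    rw [Metric.mem_ball]
    calc dist q (tip F) ≤ dist q p + dist p (tip F) := dist_triangle _ _ _
      _ < ε + dist p (tip F) := by linarith
      _ = 1/2 := by simp [hε]
  · intro x
    refine ⟨φ ⁻¹' (Metric.ball (φ x) (1/4)),
      (Metric.isOpen_ball.preimage hφ).mem_nhds (by simp [Metric.mem_ball]), ?_⟩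
    refine Set.Finite.subset (finite_meets (φ x).isCompact) ?_
    rintro F ⟨y, ⟨p, hpφ, hpb⟩, hyW⟩
    rw [Set.mem_preimage, Metric.mem_ball, Metric.NonemptyCompacts.dist_eq] at hyW
    rw [Metric.mem_ball] at hpb
    obtain ⟨q, hqφ, hq⟩ := Metric.exists_dist_lt_of_hausdorffDist_lt hpφ hyW (hfin x y)
    refine ⟨q, hqφ, ?_⟩
    rw [Metric.mem_ball]
    calc dist q (tip F) ≤ dist q p + dist p (tip F) := dist_triangle _ _ _
      _ < 1/4 + 1/2 := by rw [dist_comm q p]; exact add_lt_add hq hpb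
      _ = 3/4 := by norm_num
  · intro F x hx
    exact ⟨tip F, htip F x hx, by simp [Metric.mem_ball]⟩
end

section
/- The family F_c(J(τ)) of all nonempty closed connected subsets of the hedgehog J(τ) is uniformly equi-LC⁰: for every ε > 0 there exists δ > 0 (one may take δ = ε) such that for every closed connected S ⊆ J(τ) and every two points y₀, y₁ ∈ S with d(y₀,y₁) < δ, there is a path in S joining y₀ and y₁ of diameter < ε. -/
open Classical

section Aux

variable {A : Type*}

theorem dist_def (p q : Hedgehog A) : dist p q = hd p q := rfl

/-- Embedding of `ℝ` into a spine (nonpositive reals go to the centre). -/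
noncomputable def eSp (a : A) (u : ℝ) : Hedgehog A :=
  if h : 0 < u then some (⟨⟨min u 1, lt_min h one_pos, min_le_right _ _⟩, a⟩) else none

theorem eSp_of_pos (a : A) {u : ℝ} (h : 0 < u) (h1 : u ≤ 1) :
    eSp a u = some (⟨⟨u, h, h1⟩, a⟩) := by
  simp [eSp, h, min_eq_left h1]

theorem eSp_of_nonpos (a : A) {u : ℝ} (h : u ≤ 0) : eSp a u = none := by
  simp [eSp, not_lt.2 h]

theorem min1_lip (u v : ℝ) : |min u 1 - min v 1| ≤ |u - v| := by
  rcases le_total u 1 with hu | hu <;> rcases le_total v 1 with hv | hv <;>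
    simp [min_eq_left, min_eq_right, hu, hv] <;> rw [abs_le] <;>
    constructor <;>
    cases' abs_cases (u - v) with h h <;> linarith

theorem dist_eSp_same (a : A) (u v : ℝ) : dist (eSp a u) (eSp a v) ≤ |u - v| := by
  unfold eSp
  split_ifs with hu hv hv
  · rw [dist_def]; simp only [hd, if_pos rfl]
    exact min1_lip u v
  · rw [dist_def]; simp only [hd]
    have : min u 1 ≤ u := min_le_left _ _
    have : ¬ (0 < v) := hv
    cases' abs_cases (u - v) with h h <;> push_neg at hv <;>
      simp only [min_le_iff] <;> first | (left; linarith) | linarith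
  · rw [dist_def]; simp only [hd]
    have : min v 1 ≤ v := min_le_left _ _
    push_neg at hu
    cases' abs_cases (u - v) with h h <;> linarith
  · rw [dist_def]; simp only [hd]
    exact abs_nonneg _

theorem dist_eSp_add (a b : A) {u v : ℝ} (hu : 0 ≤ u) (hv : 0 ≤ v) :
    dist (eSp a u) (eSp b v) ≤ u + v := by
  unfold eSp
  split_ifs with h1 h2 h2 <;> rw [dist_def] <;> simp only [hd]
  · have m1 : min u 1 ≤ u := min_le_left _ _
    have m2 : min v 1 ≤ v := min_le_left _ _
    have p1 : 0 < min u 1 := lt_min h1 one_pos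
    have p2 : 0 < min v 1 := lt_min h2 one_pos
    split_ifs with hab
    · cases' abs_cases (min u 1 - min v 1) with h h <;> linarith
    · linarith
  · have : min u 1 ≤ u := min_le_left _ _; linarith
  · have : min v 1 ≤ v := min_le_left _ _; linarith
  · linarith

/-- The "through the centre" parametrization: positive reals on spine `a`,
negative reals on spine `b`. -/
noncomputable def wSp (a b : A) (r : ℝ) : Hedgehog A :=
  if 0 < r then eSp a r else eSp b (-r)

theorem wSp_lip (a b : A) (r r' : ℝ) : dist (wSp a b r) (wSp a b r') ≤ |r - r'| := by
  unfold wSp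
  split_ifs with h1 h2 h2
  · exact dist_eSp_same a r r'
  · push_neg at h2
    have := dist_eSp_add a b (le_of_lt h1) (neg_nonneg.2 h2)
    cases' abs_cases (r - r') with h h <;> linarith
  · push_neg at h1
    rw [dist_comm]
    have := dist_eSp_add a b (le_of_lt h2) (neg_nonneg.2 h1)
    cases' abs_cases (r - r') with h h <;> linarith
  · have := dist_eSp_same b (-r) (-r')
    have he : |(-r) - (-r')| = |r - r'| := by rw [abs_sub_comm]; ring_nf
    rw [he] at this; exact this

/-- Spine coordinate function. -/
noncomputable def phi (a : A) (p : Hedgehog A) : ℝ :=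
  match p with
  | none => 0
  | some q => if q.2 = a then q.1 else 0

@[simp] theorem phi_none (a : A) : phi a (none : Hedgehog A) = 0 := rfl

theorem phi_some (a : A) (q : Set.Ioc (0:ℝ) 1 × A) :
    phi a (some q) = if q.2 = a then (q.1 : ℝ) else 0 := rfl

theorem phi_lip (a : A) : LipschitzWith 1 (phi a) := by
  apply LipschitzWith.of_dist_le_mul
  intro p q
  rw [NNReal.coe_one, one_mul, Real.dist_eq, dist_def]
  rcases p with _ | ⟨s, c⟩ <;> rcases q with _ | ⟨t, d⟩ <;>
    simp only [phi, hd, phi_none]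
  · simp
  · split_ifs <;> simp [abs_of_nonneg, le_of_lt t.2.1]
  · split_ifs <;> simp [abs_of_nonneg, le_of_lt s.2.1]
  · have hs := s.2.1; have ht := t.2.1
    rcases eq_or_ne c d with rfl | hcd
    · rw [if_pos rfl]
      by_cases h1 : c = a
      · simp only [if_pos h1]; exact le_refl _
      · simp only [if_neg h1, sub_self, abs_zero]
        exact abs_nonneg _
    · rw [if_neg hcd]
      by_cases h1 : c = a <;> by_cases h2 : d = a
      · exact absurd (h1.trans h2.symm) hcd
      · rw [if_pos h1, if_neg h2, sub_zero, abs_of_pos hs]; linarith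
      · rw [if_neg h1, if_pos h2, zero_sub, abs_neg, abs_of_pos ht]; linarith
      · rw [if_neg h1, if_neg h2, sub_self, abs_zero]; linarith

theorem phi_cont (a : A) : Continuous (phi a) := (phi_lip a).continuous

theorem eq_eSp_of_phi {a : A} {z : Hedgehog A} {r : ℝ} (h : phi a z = r) (hr : 0 < r) :
    z = eSp a r := by
  rcases z with _ | ⟨s, c⟩
  · rw [phi_none] at h; rw [← h] at hr; exact absurd hr (lt_irrefl 0)
  · rw [phi_some] at h
    split_ifs at h with hc
    · rw [eSp_of_pos a hr (h ▸ s.2.2)]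
      exact congrArg some (Prod.ext_iff.2 ⟨Subtype.ext h, hc⟩)
    · rw [← h] at hr; exact absurd hr (lt_irrefl 0)

theorem spine_mem {S : Set (Hedgehog A)} (hS : IsConnected S) (a : A)
    {y₀ y₁ : Hedgehog A} (h₀ : y₀ ∈ S) (h₁ : y₁ ∈ S)
    {r : ℝ} (hr : 0 < r) (hr₀ : phi a y₁ ≤ r) (hr₁ : r ≤ phi a y₀) : eSp a r ∈ S := by
  have him := hS.isPreconnected.intermediate_value h₁ h₀ (phi_cont a).continuousOn
  obtain ⟨z, hz, hzr⟩ := him ⟨hr₀, hr₁⟩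
  rwa [eq_eSp_of_phi hzr hr] at hz

theorem none_mem_of_spine {S : Set (Hedgehog A)} (hcl : IsClosed S) {a : A} {s : ℝ}
    (hs : 0 < s) (hmem : ∀ r, 0 < r → r ≤ s → eSp a r ∈ S) :
    (none : Hedgehog A) ∈ S := by
  rw [← hcl.closure_eq]
  refine Metric.mem_closure_iff.2 fun ε hε => ?_
  have hr : 0 < min (ε/2) s := lt_min (by linarith) hs
  refine ⟨eSp a (min (ε/2) s), hmem _ hr (min_le_right _ _), ?_⟩
  rw [eSp, dif_pos hr, dist_def]
  simp only [hd]
  calc min (min (ε/2) s) 1 ≤ min (ε/2) s := min_le_left _ _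
    _ ≤ ε/2 := min_le_left _ _
    _ < ε := by linarith

theorem build_path {S : Set (Hedgehog A)} {y₀ y₁ : Hedgehog A}
    (f : ℝ → Hedgehog A) (hf : ∀ u v, dist (f u) (f v) ≤ |u - v|)
    (c₀ c₁ : ℝ) (h0 : f c₀ = y₀) (h1 : f c₁ = y₁)
    (hmem : ∀ r ∈ Set.uIcc c₀ c₁, f r ∈ S) {ε : ℝ} (hε : |c₀ - c₁| < ε) :
    ∃ γ : Path y₀ y₁, Set.range γ ⊆ S ∧ Metric.diam (Set.range γ) < ε := by
  have hfc : Continuous f := by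
    refine (LipschitzWith.of_dist_le_mul (K := 1) fun u v => ?_).continuous
    rw [NNReal.coe_one, one_mul, Real.dist_eq]; exact hf u v
  have hgc : Continuous fun x : unitInterval => c₀ + (x : ℝ) * (c₁ - c₀) := by
    continuity
  have hg_mem : ∀ x : unitInterval, c₀ + (x : ℝ) * (c₁ - c₀) ∈ Set.uIcc c₀ c₁ := by
    intro x
    have hx0 : (0:ℝ) ≤ x := x.2.1
    have hx1 : (x:ℝ) ≤ 1 := x.2.2
    rcases le_total c₀ c₁ with h | h
    · rw [Set.uIcc_of_le h]; constructor <;> nlinarith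
    · rw [Set.uIcc_of_ge h]; constructor <;> nlinarith
  refine ⟨⟨⟨fun x => f (c₀ + (x : ℝ) * (c₁ - c₀)), hfc.comp hgc⟩, ?_, ?_⟩, ?_, ?_⟩
  · simp [h0]
  · simp [h1]
  · rintro z ⟨x, rfl⟩
    exact hmem _ (hg_mem x)
  · refine lt_of_le_of_lt (Metric.diam_le_of_forall_dist_le (abs_nonneg (c₀ - c₁)) ?_) hε
    rintro z ⟨x, rfl⟩ z' ⟨x', rfl⟩
    refine le_trans (hf _ _) ?_
    have h : c₀ + (x:ℝ) * (c₁ - c₀) - (c₀ + (x':ℝ) * (c₁ - c₀))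
        = ((x:ℝ) - x') * (c₁ - c₀) := by ring
    rw [h, abs_mul]
    have hx : |(x:ℝ) - x'| ≤ 1 := by
      rw [abs_le]
      constructor <;> [linarith [x.2.1, x'.2.2]; linarith [x.2.2, x'.2.1]]
    calc |(x:ℝ) - x'| * |c₁ - c₀| ≤ 1 * |c₁ - c₀| :=
          mul_le_mul_of_nonneg_right hx (abs_nonneg _)
      _ = |c₀ - c₁| := by rw [one_mul, abs_sub_comm]

end Aux

/-- The family of all nonempty closed connected subsets of the hedgehog `J(τ)`
is uniformly equi-LC⁰: for every `ε > 0` there is `δ > 0` such that any two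
points of any closed connected `S ⊆ J(τ)` at distance `< δ` can be joined by a
path in `S` of diameter `< ε`. -/
theorem hedgehog_closed_connected_uniformly_equiLC0 (A : Type*) :
    ∀ ε : ℝ, 0 < ε → ∃ δ : ℝ, 0 < δ ∧
      ∀ S : Set (Hedgehog A), IsClosed S → IsConnected S →
        ∀ y₀ ∈ S, ∀ y₁ ∈ S, dist y₀ y₁ < δ →
          ∃ γ : Path y₀ y₁, Set.range γ ⊆ S ∧ Metric.diam (Set.range γ) < ε := by
  intro ε hε
  refine ⟨ε, hε, fun S hcl hconn y₀ h₀ y₁ h₁ hdist => ?_⟩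
  rcases y₀ with _ | ⟨⟨s, hs0, hs1⟩, a⟩ <;> rcases y₁ with _ | ⟨⟨t, ht0, ht1⟩, b⟩
  · -- none / none
    refine build_path (fun _ => (none : Hedgehog A))
      (fun u v => by rw [dist_self]; exact abs_nonneg _) 0 0 rfl rfl
      (fun r _ => h₀) ?_
    simpa using hε
  · -- none / some
    have hdt : t < ε := by simpa [dist_def, hd] using hdist
    have hsp : ∀ r, 0 < r → r ≤ t → eSp b r ∈ S := by
      intro r hr hrt
      refine spine_mem hconn b h₁ h₀ hr ?_ ?_
      · rw [phi_none]; exact le_of_lt hr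
      · rw [phi_some, if_pos rfl]; exact hrt
    refine build_path (wSp b b) (wSp_lip b b) 0 (-t) ?_ ?_ ?_ ?_
    · rw [wSp, if_neg (lt_irrefl 0), neg_zero, eSp_of_nonpos b le_rfl]
    · rw [wSp, if_neg (by linarith), neg_neg, eSp_of_pos b ht0 ht1]
    · intro r hr
      rcases Set.mem_uIcc.1 hr with ⟨hr1, hr2⟩ | ⟨hr1, hr2⟩
      · have : r = 0 := le_antisymm (by linarith) hr1
        subst this
        rw [wSp, if_neg (lt_irrefl 0), neg_zero, eSp_of_nonpos b le_rfl]
        exact h₀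
      · rcases lt_or_eq_of_le hr2 with h | h
        · rw [wSp, if_neg (not_lt.2 (le_of_lt h))]
          exact hsp (-r) (by linarith) (by linarith)
        · subst h
          rw [wSp, if_neg (lt_irrefl 0), neg_zero, eSp_of_nonpos b le_rfl]
          exact h₀
    · simpa [abs_of_pos ht0] using hdt
  · -- some / none
    have hds : s < ε := by simpa [dist_def, hd] using hdist
    have hsp : ∀ r, 0 < r → r ≤ s → eSp a r ∈ S := by
      intro r hr hrs
      refine spine_mem hconn a h₀ h₁ hr ?_ ?_
      · rw [phi_none]; exact le_of_lt hr
      · rw [phi_some, if_pos rfl]; exact hrs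
    refine build_path (wSp a a) (wSp_lip a a) s 0 ?_ ?_ ?_ ?_
    · rw [wSp, if_pos hs0, eSp_of_pos a hs0 hs1]
    · rw [wSp, if_neg (lt_irrefl 0), neg_zero, eSp_of_nonpos a le_rfl]
    · intro r hr
      rcases Set.mem_uIcc.1 hr with ⟨hr1, hr2⟩ | ⟨hr1, hr2⟩
      · have h0r : r = 0 := le_antisymm hr2 (by linarith)
        subst h0r
        rw [wSp, if_neg (lt_irrefl 0), neg_zero, eSp_of_nonpos a le_rfl]
        exact h₁
      · rcases lt_or_eq_of_le hr1 with h | h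
        · rw [wSp, if_pos h]
          exact hsp r h hr2
        · rw [wSp, if_neg (h ▸ lt_irrefl 0), ← h, neg_zero, eSp_of_nonpos a le_rfl]
          exact h₁
    · rw [sub_zero, abs_of_pos hs0]; exact hds
  · -- some / some
    rcases eq_or_ne a b with rfl | hab
    · -- same spine
      have hst : |s - t| < ε := by simpa [dist_def, hd] using hdist
      refine build_path (wSp a a) (wSp_lip a a) s t ?_ ?_ ?_ hst
      · rw [wSp, if_pos hs0, eSp_of_pos a hs0 hs1]
      · rw [wSp, if_pos ht0, eSp_of_pos a ht0 ht1]
      · intro r hr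
        rcases Set.mem_uIcc.1 hr with ⟨hr1, hr2⟩ | ⟨hr1, hr2⟩
        · have hrpos : 0 < r := lt_of_lt_of_le hs0 hr1
          rw [wSp, if_pos hrpos]
          refine spine_mem hconn a h₁ h₀ hrpos ?_ ?_
          · rw [phi_some, if_pos rfl]; exact hr1
          · rw [phi_some, if_pos rfl]; exact hr2
        · have hrpos : 0 < r := lt_of_lt_of_le ht0 hr1
          rw [wSp, if_pos hrpos]
          refine spine_mem hconn a h₀ h₁ hrpos ?_ ?_
          · rw [phi_some, if_pos rfl]; exact hr1
          · rw [phi_some, if_pos rfl]; exact hr2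
    · -- different spines
      have hst : s + t < ε := by simpa [dist_def, hd, hab] using hdist
      have hspa : ∀ r, 0 < r → r ≤ s → eSp a r ∈ S := by
        intro r hr hrs
        refine spine_mem hconn a h₀ h₁ hr ?_ ?_
        · rw [phi_some, if_neg fun h => hab h.symm]; exact le_of_lt hr
        · rw [phi_some, if_pos rfl]; exact hrs
      have hspb : ∀ r, 0 < r → r ≤ t → eSp b r ∈ S := by
        intro r hr hrt
        refine spine_mem hconn b h₁ h₀ hr ?_ ?_
        · rw [phi_some, if_neg hab]; exact le_of_lt hr
        · rw [phi_some, if_pos rfl]; exact hrt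
      have hnone : (none : Hedgehog A) ∈ S := none_mem_of_spine hcl hs0 hspa
      refine build_path (wSp a b) (wSp_lip a b) s (-t) ?_ ?_ ?_ ?_
      · rw [wSp, if_pos hs0, eSp_of_pos a hs0 hs1]
      · rw [wSp, if_neg (by linarith), neg_neg, eSp_of_pos b ht0 ht1]
      · intro r hr
        rcases Set.mem_uIcc.1 hr with ⟨hr1, hr2⟩ | ⟨hr1, hr2⟩
        · exact absurd (lt_of_lt_of_le hs0 hr1) (by linarith)
        · by_cases hrpos : 0 < r
          · rw [wSp, if_pos hrpos]
            exact hspa r hrpos hr2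
          · push_neg at hrpos
            rcases lt_or_eq_of_le hrpos with h | h
            · rw [wSp, if_neg (not_lt.2 (le_of_lt h))]
              exact hspb (-r) (by linarith) (by linarith)
            · subst h
              rw [wSp, if_neg (lt_irrefl 0), neg_zero, eSp_of_nonpos b le_rfl]
              exact hnone
      · rw [sub_neg_eq_add, abs_of_pos (by linarith)]; exact hst
end

section
/- Let X be a normal space with dim X = 0 (disjoint closed sets are contained in disjoint clopen sets), Y = {0,1,…,n} a finite discrete space, Φ: X → 2^Y lower semi-continuous, and θ: X → 2^Y upper semi-continuous with θ(x) ⊆ Φ(x) for all x. Then there exists a continuous (locally constant) mapping φ: X → 2^Y with θ(x) ⊆ φ(x) ⊆ Φ(x) for all x. -/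
/-- Let `X` be a T1 normal space with `dim X = 0` (disjoint closed sets are
contained in disjoint clopen sets), `Y = {0,1,…,n}` a finite discrete space,
`Φ : X → 2^Y` lower semi-continuous and `θ : X → 2^Y` upper semi-continuous
with `θ(x) ⊆ Φ(x)` for all `x`. Then there exists a continuous (locally
constant) mapping `φ : X → 2^Y` with `θ(x) ⊆ φ(x) ⊆ Φ(x)` for all `x`. -/
theorem zero_dim_finite_insertion {X : Type*} [TopologicalSpace X] [T1Space X]
    [NormalSpace X]
    (hdim : ∀ F₁ F₂ : Set X, IsClosed F₁ → IsClosed F₂ → Disjoint F₁ F₂ →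
      ∃ U₁ U₂ : Set X, IsClopen U₁ ∧ IsClopen U₂ ∧ Disjoint U₁ U₂ ∧
        F₁ ⊆ U₁ ∧ F₂ ⊆ U₂)
    (n : ℕ) (Φ θ : X → Set (Fin (n + 1)))
    (hΦne : ∀ x, (Φ x).Nonempty) (hθne : ∀ x, (θ x).Nonempty)
    (hΦlsc : ∀ y : Fin (n + 1), IsOpen {x | y ∈ Φ x})
    (hθusc : ∀ y : Fin (n + 1), IsClosed {x | y ∈ θ x})
    (hsub : ∀ x, θ x ⊆ Φ x) :
    ∃ φ : X → Set (Fin (n + 1)), IsLocallyConstant φ ∧ (∀ x, (φ x).Nonempty) ∧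
      ∀ x, θ x ⊆ φ x ∧ φ x ⊆ Φ x := by
  classical

  -- For each y, separate the closed set {x | y ∈ θ x} from the closed
  -- complement of the open set {x | y ∈ Φ x} by a clopen set.
  have key : ∀ y : Fin (n + 1), ∃ U : Set X, IsClopen U ∧
      {x | y ∈ θ x} ⊆ U ∧ U ⊆ {x | y ∈ Φ x} := by
    intro y
    obtain ⟨U₁, U₂, hU₁, hU₂, hdis, hF₁, hF₂⟩ :=
      hdim {x | y ∈ θ x} {x | y ∈ Φ x}ᶜ (hθusc y) (hΦlsc y).isClosed_compl
        (by
          rw [Set.disjoint_left]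
          intro x hx hx'
          exact hx' (hsub x hx))
    refine ⟨U₁, hU₁, hF₁, fun x hx => ?_⟩
    by_contra hxΦ
    exact (Set.disjoint_left.mp hdis hx) (hF₂ hxΦ)
  choose U hUclopen hUθ hUΦ using key
  refine ⟨fun x => {y | x ∈ U y}, ?_, ?_, ?_⟩
  · rw [IsLocallyConstant.iff_exists_open]
    intro x
    refine ⟨⋂ y, if x ∈ U y then U y else (U y)ᶜ, ?_, ?_, ?_⟩
    · exact isOpen_iInter_of_finite fun y => by
        split
        · exact (hUclopen y).2
        · exact (hUclopen y).1.isOpen_compl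
    · exact Set.mem_iInter.mpr fun y => by split <;> simpa [*]
    · intro x' hx'
      ext y
      have hy := Set.mem_iInter.mp hx' y
      by_cases h : x ∈ U y <;> simp only [h, if_true, if_false] at hy <;>
        simp [Set.mem_setOf_eq, h, hy] <;> exact hy
  · intro x
    obtain ⟨y, hy⟩ := hθne x
    exact ⟨y, hUθ y hy⟩
  · intro x
    exact ⟨fun y hy => hUθ y hy, fun y hy => hUΦ y hy⟩
end
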